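/- (Post-hoc suboptimality bound.) Let Q be an N×U real matrix with nonnegative entries, let Z_1,…,Z_M : ℝ^U → ℝ be monotone on componentwise-nonnegative vectors, and set D = Q̃(A_root) − Q̃(A_null) > 0. Let 0 ≤ α < 1/2. Let O be a finite nonempty set of M×N allocation matrices (entries 0 or 1) such that every M×N allocation matrix (entries 0 or 1) either belongs to O or is ≤ some element of O entrywise. Let TBO : O → ℝ, let N' ∈ O attain the maximum of Q̃ over O, and let Â be an M×N allocation matrix (entries 0 or 1) satisfying (1 − α)·f_NAC(Â) ≤ α·TBO(P) + (1 − α)·f_NAC(P) for every P ∈ O. Then for every M×N allocation matrix A* (entries 0 or 1), Q̃(A*) − Q̃(Â) ≤ (α / (1 − α))·D·TBO(N'). -/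
import Mathlib


/-- A binary allocation matrix: every entry is 0 or 1. -/
def IsAlloc {M N : ℕ} (A : Matrix (Fin M) (Fin N) ℝ) : Prop :=
  ∀ i j, A i j = 0 ∨ A i j = 1

/-- A trait-efficacy map is monotone on componentwise-nonnegative vectors. -/
def MonotoneEff {U : ℕ} (Z : (Fin U → ℝ) → ℝ) : Prop :=
  ∀ x y : Fin U → ℝ, (∀ u, 0 ≤ x u) → (∀ u, 0 ≤ y u) → (∀ u, x u ≤ y u) → Z x ≤ Z y

/-- Total allocation efficacy: `Q̃(A) = ∑ m, Z m ((A ⬝ Q) m)`. -/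
noncomputable def totalEff {M N U : ℕ} (Q : Matrix (Fin N) (Fin U) ℝ)
    (Z : Fin M → (Fin U → ℝ) → ℝ) (A : Matrix (Fin M) (Fin N) ℝ) : ℝ :=
  ∑ m, Z m ((A * Q) m)

/-- The all-ones (root) allocation. -/
def Aroot (M N : ℕ) : Matrix (Fin M) (Fin N) ℝ := fun _ _ => 1

/-- The all-zeros (null) allocation. -/
def Anull (M N : ℕ) : Matrix (Fin M) (Fin N) ℝ := fun _ _ => 0

/-- Normalized Allocation Cost. -/
noncomputable def fNAC {M N U : ℕ} (Q : Matrix (Fin N) (Fin U) ℝ)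
    (Z : Fin M → (Fin U → ℝ) → ℝ) (A : Matrix (Fin M) (Fin N) ℝ) : ℝ :=
  (totalEff Q Z (Aroot M N) - totalEff Q Z A) /
    (totalEff Q Z (Aroot M N) - totalEff Q Z (Anull M N))

lemma totalEff_mono {M N U : ℕ} (Q : Matrix (Fin N) (Fin U) ℝ) (hQ : ∀ i u, 0 ≤ Q i u)
    (Z : Fin M → (Fin U → ℝ) → ℝ) (hZ : ∀ m, MonotoneEff (Z m))
    (A B : Matrix (Fin M) (Fin N) ℝ) (hA : ∀ i j, 0 ≤ A i j) (hB : ∀ i j, 0 ≤ B i j)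
    (hAB : ∀ i j, A i j ≤ B i j) : totalEff Q Z A ≤ totalEff Q Z B := by
  unfold totalEff
  apply Finset.sum_le_sum
  intro m _
  apply hZ m
  · intro u
    simp only [Matrix.mul_apply]
    exact Finset.sum_nonneg fun j _ => mul_nonneg (hA m j) (hQ j u)
  · intro u
    simp only [Matrix.mul_apply]
    exact Finset.sum_nonneg fun j _ => mul_nonneg (hB m j) (hQ j u)
  · intro u
    simp only [Matrix.mul_apply]
    exact Finset.sum_le_sum fun j _ => mul_le_mul_of_nonneg_right (hAB m j) (hQ j u)

theorem eitags_posthoc_bound {M N U : ℕ}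
    (Q : Matrix (Fin N) (Fin U) ℝ) (hQ : ∀ i u, 0 ≤ Q i u)
    (Z : Fin M → (Fin U → ℝ) → ℝ) (hZ : ∀ m, MonotoneEff (Z m))
    (D : ℝ) (hDdef : D = totalEff Q Z (Aroot M N) - totalEff Q Z (Anull M N))
    (hD : 0 < D)
    (α : ℝ) (hα0 : 0 ≤ α) (hα : α < 1 / 2)
    (Op : Finset (Matrix (Fin M) (Fin N) ℝ)) (hOp : Op.Nonempty)
    (hOpAlloc : ∀ P ∈ Op, IsAlloc P)
    (hcover : ∀ A : Matrix (Fin M) (Fin N) ℝ, IsAlloc A →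
      A ∈ Op ∨ ∃ P ∈ Op, ∀ i j, A i j ≤ P i j)
    (TBO : Matrix (Fin M) (Fin N) ℝ → ℝ)
    (N' : Matrix (Fin M) (Fin N) ℝ) (hN'mem : N' ∈ Op)
    (hN'max : ∀ P ∈ Op, totalEff Q Z P ≤ totalEff Q Z N')
    (Ahat : Matrix (Fin M) (Fin N) ℝ) (hAhat : IsAlloc Ahat)
    (hgreedy : ∀ P ∈ Op,
      (1 - α) * fNAC Q Z Ahat ≤ α * TBO P + (1 - α) * fNAC Q Z P)
    (Astar : Matrix (Fin M) (Fin N) ℝ) (hAstar : IsAlloc Astar) :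
    totalEff Q Z Astar - totalEff Q Z Ahat ≤ (α / (1 - α)) * D * TBO N' := by
  have hαlt1 : α < 1 := by linarith
  have h1α : 0 < 1 - α := by linarith
  -- Step 1: Q̃(A*) ≤ Q̃(N')
  have hnn : ∀ (A : Matrix (Fin M) (Fin N) ℝ), IsAlloc A → ∀ i j, 0 ≤ A i j := by
    intro A hA i j; rcases hA i j with h | h <;> rw [h] <;> norm_num
  have hstar : totalEff Q Z Astar ≤ totalEff Q Z N' := by
    rcases hcover Astar hAstar with h | ⟨P, hP, hle⟩
    · exact hN'max _ h
    · exact le_trans (totalEff_mono Q hQ Z hZ Astar P (hnn _ hAstar)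
        (hnn _ (hOpAlloc _ hP)) hle) (hN'max _ hP)
  -- Step 2: from greedy at P = N'
  have hg := hgreedy N' hN'mem
  unfold fNAC at hg
  rw [← hDdef] at hg
  have hkey : (1 - α) * ((totalEff Q Z (Aroot M N) - totalEff Q Z Ahat) / D)
      ≤ α * TBO N' + (1 - α) * ((totalEff Q Z (Aroot M N) - totalEff Q Z N') / D) := hg
  have hkey2 : (1 - α) * (totalEff Q Z (Aroot M N) - totalEff Q Z Ahat)
      ≤ α * TBO N' * D + (1 - α) * (totalEff Q Z (Aroot M N) - totalEff Q Z N') := by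
    have := mul_le_mul_of_nonneg_right hkey (le_of_lt hD)
    field_simp at this
    linarith [this]
  have h3 : (1 - α) * (totalEff Q Z N' - totalEff Q Z Ahat) ≤ α * TBO N' * D := by
    linarith
  rw [div_mul_eq_mul_div, div_mul_eq_mul_div, le_div_iff₀ h1α]
  nlinarith [h3, hstar]
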